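/- arXiv:1704.08136 — 5 statements merged into one kernel-verified Lean document; each statement's English description precedes it below -/
import Mathlib

section
/- Every m×n Latin rectangle (an m×n array with entries in {1,...,n} such that each symbol appears at most once in each row and each column, with every row containing all n symbols... i.e., each row is a permutation of {1,...,n} and each column has distinct entries) with m < n can be extended to an (m+1)×n Latin rectangle. -/
/-- M. Hall's theorem: every m×n Latin rectangle with m < n can be extended
to an (m+1)×n Latin rectangle. -/
theorem latin_rectangle_extension (m n : ℕ) (hmn : m < n)
    (R : Fin m → Fin n → Fin n)
    (hrow : ∀ i, Function.Injective (R i))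
    (hcol : ∀ j, Function.Injective fun i => R i j) :
    ∃ R' : Fin (m + 1) → Fin n → Fin n,
      (∀ i, Function.Injective (R' i)) ∧
      (∀ j, Function.Injective fun i => R' i j) ∧
      (∀ (i : Fin m) (j : Fin n), R' i.castSucc j = R i j) := by
  classical
  -- t j = set of symbols missing from column j
  set t : Fin n → Finset (Fin n) :=
    fun j => Finset.univ \ (Finset.univ.image fun i => R i j) with ht
  have hmemt : ∀ (s : Fin n) (j : Fin n), s ∈ t j ↔ ∀ i, R i j ≠ s := by
    intro s j
    rw [ht]
    simp [Finset.mem_sdiff, Finset.mem_image]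
  have hcard : ∀ j, (t j).card = n - m := by
    intro j
    rw [ht]
    rw [Finset.card_sdiff_of_subset (Finset.subset_univ _),
      Finset.card_image_of_injective _ (hcol j), Finset.card_univ,
      Finset.card_univ, Fintype.card_fin, Fintype.card_fin]
  have hrowbij : ∀ i, Function.Bijective (R i) := fun i =>
    Finite.injective_iff_bijective.1 (hrow i)
  -- each symbol is missing from exactly n - m columns
  have hcount : ∀ s : Fin n,
      (Finset.univ.filter fun j => s ∈ t j).card = n - m := by
    intro s
    choose c hc using fun i => (hrowbij i).2 s
    have hcinj : Function.Injective c := by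
      intro i1 i2 h
      exact hcol (c i1) (show R i1 (c i1) = R i2 (c i1) by rw [hc i1, h, hc i2])
    have heq : (Finset.univ.filter fun j => s ∈ t j)
        = Finset.univ \ Finset.univ.image c := by
      ext j
      simp only [Finset.mem_filter, Finset.mem_sdiff, Finset.mem_univ,
        true_and, Finset.mem_image, not_exists, hmemt]
      constructor
      · intro h i hi
        exact h i (by rw [← hi]; exact hc i)
      · intro h i hRij
        exact h i (hrow i (by rw [hc i, hRij]))
    rw [heq, Finset.card_sdiff_of_subset (Finset.subset_univ _), Finset.card_univ,
      Finset.card_image_of_injective _ hcinj, Finset.card_univ,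
      Fintype.card_fin, Fintype.card_fin]
  have hnm : 0 < n - m := Nat.sub_pos_of_lt hmn
  -- Hall's condition
  have hall : ∀ S : Finset (Fin n), S.card ≤ (S.biUnion t).card := by
    intro S
    have key : S.card * (n - m) ≤ (S.biUnion t).card * (n - m) := by
      calc S.card * (n - m) = ∑ j ∈ S, (t j).card := by
              rw [Finset.sum_congr rfl fun j _ => hcard j, Finset.sum_const,
                smul_eq_mul]
        _ = ∑ j ∈ S, ((S.biUnion t).filter fun s => s ∈ t j).card := by
              refine Finset.sum_congr rfl fun j hj => ?_
              congr 1
              ext s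
              simp only [Finset.mem_filter, Finset.mem_biUnion]
              exact ⟨fun h => ⟨⟨j, hj, h⟩, h⟩, fun h => h.2⟩
        _ = ∑ s ∈ S.biUnion t, (S.filter fun j => s ∈ t j).card := by
              simp only [Finset.card_filter]
              rw [Finset.sum_comm]
        _ ≤ ∑ _s ∈ S.biUnion t, (n - m) := by
              refine Finset.sum_le_sum fun s _ => ?_
              calc (S.filter fun j => s ∈ t j).card
                  ≤ (Finset.univ.filter fun j => s ∈ t j).card :=
                    Finset.card_le_card (Finset.filter_subset_filter _
                      (Finset.subset_univ S))
                _ = n - m := hcount s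
        _ = (S.biUnion t).card * (n - m) := by
              rw [Finset.sum_const, smul_eq_mul]
    exact Nat.le_of_mul_le_mul_right key hnm
  obtain ⟨f, hfinj, hf⟩ :=
    (Finset.all_card_le_biUnion_card_iff_exists_injective t).1 hall
  refine ⟨Fin.snoc R f, ?_, ?_, ?_⟩
  · intro i
    refine Fin.lastCases ?_ ?_ i
    · simpa using hfinj
    · intro i'
      simpa using hrow i'
  · intro j i1 i2 h
    simp only at h
    rcases Fin.eq_castSucc_or_eq_last i1 with ⟨i1', rfl⟩ | rfl <;>
      rcases Fin.eq_castSucc_or_eq_last i2 with ⟨i2', rfl⟩ | rfl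
    · simp only [Fin.snoc_castSucc] at h
      rw [hcol j h]
    · simp only [Fin.snoc_castSucc, Fin.snoc_last] at h
      exact absurd h ((hmemt (f j) j).1 (hf j) i1')
    · simp only [Fin.snoc_castSucc, Fin.snoc_last] at h
      exact absurd h.symm ((hmemt (f j) j).1 (hf j) i2')
    · rfl
  · intro i j
    exact congrFun (Fin.snoc_castSucc _ _ _) j
end

section
/- Every bipartite graph with maximum degree at most k admits a proper edge coloring with k colors. -/
section Aux

variable {a b : ℕ}

/-- A proper partial edge coloring. -/
def EProper (s : Finset (Fin a × Fin b)) (c : Fin a × Fin b → ℕ) : Prop :=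
  ∀ e₁ ∈ s, ∀ e₂ ∈ s, e₁ ≠ e₂ → (e₁.1 = e₂.1 ∨ e₁.2 = e₂.2) → c e₁ ≠ c e₂

/-- Alternating reachability from `x` in the subgraph of edges colored `α` or `β`:
from a left vertex we follow `β`-edges, from a right vertex we follow `α`-edges. -/
inductive Reach (s : Finset (Fin a × Fin b)) (c : Fin a × Fin b → ℕ) (α β : ℕ)
    (x : Fin a) : Fin a ⊕ Fin b → Prop
  | base : Reach s c α β x (.inl x)
  | stepB (e : Fin a × Fin b) : Reach s c α β x (.inl e.1) → e ∈ s → c e = β →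
      Reach s c α β x (.inr e.2)
  | stepA (e : Fin a × Fin b) : Reach s c α β x (.inr e.2) → e ∈ s → c e = α →
      Reach s c α β x (.inl e.1)

lemma reach_inr {s : Finset (Fin a × Fin b)} {c α β x v}
    (h : Reach s c α β x (.inr v)) :
    ∃ e ∈ s, e.2 = v ∧ c e = β ∧ Reach s c α β x (.inl e.1) := by
  cases h with
  | stepB e he hmem hc => exact ⟨e, hmem, rfl, hc, he⟩

lemma reach_inl {s : Finset (Fin a × Fin b)} {c α β x u}
    (h : Reach s c α β x (.inl u)) :
    u = x ∨ ∃ e ∈ s, e.1 = u ∧ c e = α ∧ Reach s c α β x (.inr e.2) := by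
  cases h with
  | base => exact Or.inl rfl
  | stepA e he hmem hc => exact Or.inr ⟨e, hmem, rfl, hc, he⟩

/-- The set of edges that will get their colors swapped. -/
def SwapSet (s : Finset (Fin a × Fin b)) (c : Fin a × Fin b → ℕ) (α β : ℕ)
    (x : Fin a) (e : Fin a × Fin b) : Prop :=
  (Reach s c α β x (.inl e.1) ∧ c e = β) ∨ (Reach s c α β x (.inr e.2) ∧ c e = α)

lemma swapSet_closed {s : Finset (Fin a × Fin b)} {c : Fin a × Fin b → ℕ} {α β : ℕ}
    {x : Fin a} (_hαβ : α ≠ β) (hprop : EProper s c)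
    (hx : ∀ e ∈ s, e.1 = x → c e ≠ α)
    {e₁ e₂ : Fin a × Fin b} (h₁ : e₁ ∈ s) (h₂ : e₂ ∈ s)
    (hS : SwapSet s c α β x e₁) (hc₂ : c e₂ = α ∨ c e₂ = β)
    (hshare : e₁.1 = e₂.1 ∨ e₁.2 = e₂.2) :
    SwapSet s c α β x e₂ := by
  rcases eq_or_ne e₁ e₂ with rfl | hne
  · exact hS
  have hdiff : c e₁ ≠ c e₂ := hprop e₁ h₁ e₂ h₂ hne hshare
  rcases hS with ⟨hr, hc₁⟩ | ⟨hr, hc₁⟩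
  · -- c e₁ = β, so c e₂ = α
    have hc₂' : c e₂ = α := by
      rcases hc₂ with h | h
      · exact h
      · exact absurd (hc₁.trans h.symm) hdiff
    rcases hshare with hsh | hsh
    · -- they share the left vertex
      rcases reach_inl hr with hxx | ⟨e₃, h₃, h₃1, hc₃, hr₃⟩
      · exact absurd hc₂' (hx e₂ h₂ (hsh ▸ hxx ▸ rfl))
      · have he₃ : e₃ = e₂ := by
          by_contra hne₃
          exact hprop e₃ h₃ e₂ h₂ hne₃ (Or.inl (h₃1.trans hsh))
            (hc₃.trans hc₂'.symm)
        exact Or.inr ⟨he₃ ▸ hr₃, hc₂'⟩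
    · -- they share the right vertex
      have : Reach s c α β x (.inr e₂.2) := hsh ▸ Reach.stepB e₁ hr h₁ hc₁
      exact Or.inr ⟨this, hc₂'⟩
  · -- c e₁ = α, so c e₂ = β
    have hc₂' : c e₂ = β := by
      rcases hc₂ with h | h
      · exact absurd (hc₁.trans h.symm) hdiff
      · exact h
    rcases hshare with hsh | hsh
    · -- share left vertex
      have : Reach s c α β x (.inl e₂.1) := hsh ▸ Reach.stepA e₁ hr h₁ hc₁
      exact Or.inl ⟨this, hc₂'⟩
    · -- share right vertex
      rcases reach_inr hr with ⟨e₃, h₃, h₃2, hc₃, hr₃⟩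
      have he₃ : e₃ = e₂ := by
        by_contra hne₃
        exact hprop e₃ h₃ e₂ h₂ hne₃ (Or.inr (h₃2.trans hsh))
          (hc₃.trans hc₂'.symm)
      exact Or.inl ⟨he₃ ▸ hr₃, hc₂'⟩

/-- Kempe-chain swap: make `β` missing at both `x` and `y`. -/
lemma swap_main (s : Finset (Fin a × Fin b)) (c : Fin a × Fin b → ℕ) (k : ℕ)
    (x : Fin a) (y : Fin b) (α β : ℕ) (hαβ : α ≠ β) (hα : α < k) (hβ : β < k)
    (hcol : ∀ e ∈ s, c e < k) (hprop : EProper s c)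
    (hx : ∀ e ∈ s, e.1 = x → c e ≠ α) (hy : ∀ e ∈ s, e.2 = y → c e ≠ β) :
    ∃ c'' : Fin a × Fin b → ℕ, (∀ e ∈ s, c'' e < k) ∧ EProper s c'' ∧
      (∀ e ∈ s, e.1 = x → c'' e ≠ β) ∧ (∀ e ∈ s, e.2 = y → c'' e ≠ β) := by
  classical
  set S : Fin a × Fin b → Prop := SwapSet s c α β x with hSdef
  refine ⟨fun e => if S e then (if c e = β then α else β) else c e, ?_, ?_, ?_, ?_⟩
  · intro e he
    by_cases h : S e
    · simp only [h, if_true]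
      split <;> [exact hα; exact hβ]
    · simpa [h] using hcol e he
  · intro e₁ h₁ e₂ h₂ hne hshare
    have hdiff : c e₁ ≠ c e₂ := hprop e₁ h₁ e₂ h₂ hne hshare
    by_cases hs₁ : S e₁ <;> by_cases hs₂ : S e₂
    · simp only [hs₁, hs₂, if_true]
      have hc₁ : c e₁ = α ∨ c e₁ = β := by
        rcases hs₁ with ⟨_, h⟩ | ⟨_, h⟩ <;> [exact Or.inr h; exact Or.inl h]
      have hc₂ : c e₂ = α ∨ c e₂ = β := by
        rcases hs₂ with ⟨_, h⟩ | ⟨_, h⟩ <;> [exact Or.inr h; exact Or.inl h]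
      rcases hc₁ with h1 | h1 <;> rcases hc₂ with h2 | h2 <;>
        simp [h1, h2, hαβ, Ne.symm hαβ] <;>
        exact hdiff (h1.trans h2.symm)
    · -- e₁ swapped, e₂ not: then c e₂ ∉ {α, β} by closure, but swapped value ∈ {α, β}
      have hc₂ : c e₂ ≠ α ∧ c e₂ ≠ β := by
        constructor <;> intro h <;>
          exact hs₂ (swapSet_closed hαβ hprop hx h₁ h₂ hs₁ (by tauto) hshare)
      simp only [hs₁, hs₂, if_true, if_false]
      split
      · exact fun h => hc₂.1 h.symm
      · exact fun h => hc₂.2 h.symm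
    · have hc₁ : c e₁ ≠ α ∧ c e₁ ≠ β := by
        constructor <;> intro h <;>
          exact hs₁ (swapSet_closed hαβ hprop hx h₂ h₁ hs₂ (by tauto)
            (by tauto))
      simp only [hs₁, hs₂, if_true, if_false]
      split
      · exact fun h => hc₁.1 h
      · exact fun h => hc₁.2 h
    · simp only [hs₁, hs₂, if_false]
      exact hdiff
  · -- β missing at x
    intro e he he1
    by_cases h : S e
    · simp only [h, if_true]
      split
      · exact fun hh => hαβ hh
      · rename_i hcb
        intro _
        have hcα : c e = α := by
          rcases h with ⟨_, hh⟩ | ⟨_, hh⟩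
          · exact absurd hh hcb
          · exact hh
        exact hx e he he1 hcα
    · simp only [h, if_false]
      intro hcb
      exact h (Or.inl ⟨he1 ▸ Reach.base, hcb⟩)
  · -- β missing at y
    intro e he he2
    by_cases h : S e
    · simp only [h, if_true]
      split
      · exact fun hh => hαβ hh
      · rename_i hcb
        intro _
        have hcα : c e = α := by
          rcases h with ⟨_, hh⟩ | ⟨_, hh⟩
          · exact absurd hh hcb
          · exact hh
        have hr : Reach s c α β x (.inr y) := by
          rcases h with ⟨_, hh⟩ | ⟨hr, _⟩
          · exact absurd hh hcb
          · exact he2 ▸ hr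
        rcases reach_inr hr with ⟨e₃, h₃, h₃2, hc₃, _⟩
        exact hy e₃ h₃ h₃2 hc₃
    · simp only [h, if_false]
      exact hy e he he2

/-- Extend a proper coloring by one edge using a color missing at both endpoints. -/
lemma extend_coloring (s : Finset (Fin a × Fin b)) (c : Fin a × Fin b → ℕ) (k : ℕ)
    (x : Fin a) (y : Fin b) (γ : ℕ) (hγ : γ < k) (hxy : (x, y) ∉ s)
    (hcol : ∀ e ∈ s, c e < k) (hprop : EProper s c)
    (hx : ∀ e ∈ s, e.1 = x → c e ≠ γ) (hy : ∀ e ∈ s, e.2 = y → c e ≠ γ) :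
    ∃ c' : Fin a × Fin b → ℕ, (∀ e ∈ insert (x, y) s, c' e < k) ∧
      EProper (insert (x, y) s) c' := by
  classical
  refine ⟨fun e => if e = (x, y) then γ else c e, ?_, ?_⟩
  · intro e he
    rcases Finset.mem_insert.1 he with rfl | he
    · simpa using hγ
    · have : e ≠ (x, y) := fun h => hxy (h ▸ he)
      simpa [this] using hcol e he
  · intro e₁ h₁ e₂ h₂ hne hshare
    rcases Finset.mem_insert.1 h₁ with rfl | h₁ <;>
      rcases Finset.mem_insert.1 h₂ with rfl | h₂
    · exact absurd rfl hne
    · have hne₂ : e₂ ≠ (x, y) := fun h => hxy (h ▸ h₂)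
      simp only [if_pos rfl, if_neg hne₂]
      rcases hshare with hsh | hsh
      · exact fun h => hx e₂ h₂ hsh.symm h.symm
      · exact fun h => hy e₂ h₂ hsh.symm h.symm
    · have hne₁ : e₁ ≠ (x, y) := fun h => hxy (h ▸ h₁)
      simp only [if_pos rfl, if_neg hne₁]
      rcases hshare with hsh | hsh
      · exact fun h => hx e₁ h₁ hsh h
      · exact fun h => hy e₁ h₁ hsh h
    · have hne₁ : e₁ ≠ (x, y) := fun h => hxy (h ▸ h₁)
      have hne₂ : e₂ ≠ (x, y) := fun h => hxy (h ▸ h₂)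
      simp only [if_neg hne₁, if_neg hne₂]
      exact hprop e₁ h₁ e₂ h₂ hne hshare

/-- Main extension step: given a missing color at each endpoint (possibly different),
extend the coloring. -/
lemma extend_step (s : Finset (Fin a × Fin b)) (c : Fin a × Fin b → ℕ) (k : ℕ)
    (x : Fin a) (y : Fin b) (α β : ℕ) (hα : α < k) (hβ : β < k) (hxy : (x, y) ∉ s)
    (hcol : ∀ e ∈ s, c e < k) (hprop : EProper s c)
    (hx : ∀ e ∈ s, e.1 = x → c e ≠ α) (hy : ∀ e ∈ s, e.2 = y → c e ≠ β) :
    ∃ c' : Fin a × Fin b → ℕ, (∀ e ∈ insert (x, y) s, c' e < k) ∧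
      EProper (insert (x, y) s) c' := by
  rcases eq_or_ne α β with rfl | hαβ
  · exact extend_coloring s c k x y α hα hxy hcol hprop hx hy
  · obtain ⟨c'', hcol'', hprop'', hx'', hy''⟩ :=
      swap_main s c k x y α β hαβ hα hβ hcol hprop hx hy
    exact extend_coloring s c'' k x y β hβ hxy hcol'' hprop'' hx'' hy''

end Aux

/-- König's edge-coloring theorem: every bipartite graph with maximum degree
at most k admits a proper edge coloring with k colors. -/
theorem bipartite_edge_coloring (a b k : ℕ) (E : Finset (Fin a × Fin b))
    (hdegL : ∀ x : Fin a, (E.filter fun e => e.1 = x).card ≤ k)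
    (hdegR : ∀ y : Fin b, (E.filter fun e => e.2 = y).card ≤ k) :
    ∃ c : Fin a × Fin b → ℕ,
      (∀ e ∈ E, c e < k) ∧
      (∀ e₁ ∈ E, ∀ e₂ ∈ E, e₁ ≠ e₂ → (e₁.1 = e₂.1 ∨ e₁.2 = e₂.2) → c e₁ ≠ c e₂) := by
  classical
  induction E using Finset.induction_on with
  | empty => exact ⟨fun _ => 0, by simp, by simp⟩
  | @insert e s he ih =>
    -- degree bounds for s
    have hdegL' : ∀ x : Fin a, (s.filter fun e => e.1 = x).card ≤ k := fun x =>
      le_trans (Finset.card_le_card (Finset.filter_subset_filter _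
        (Finset.subset_insert e s))) (hdegL x)
    have hdegR' : ∀ y : Fin b, (s.filter fun e => e.2 = y).card ≤ k := fun y =>
      le_trans (Finset.card_le_card (Finset.filter_subset_filter _
        (Finset.subset_insert e s))) (hdegR y)
    obtain ⟨c, hcol, hprop⟩ := ih hdegL' hdegR'
    obtain ⟨x, y⟩ := e
    -- strict degree bounds at x and y in s
    have hxcard : ((s.filter fun e => e.1 = x).card + 1) ≤ k := by
      have : (insert (x, y) (s.filter fun e => e.1 = x)) ⊆
          ((insert (x, y) s).filter fun e => e.1 = x) := by
        intro e' he'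
        rcases Finset.mem_insert.1 he' with rfl | he'
        · simp
        · rw [Finset.mem_filter] at he' ⊢
          exact ⟨Finset.mem_insert_of_mem he'.1, he'.2⟩
      calc (s.filter fun e => e.1 = x).card + 1
          = (insert (x, y) (s.filter fun e => e.1 = x)).card := by
            rw [Finset.card_insert_of_notMem fun h => he (Finset.mem_filter.1 h).1]
        _ ≤ ((insert (x, y) s).filter fun e => e.1 = x).card :=
            Finset.card_le_card this
        _ ≤ k := hdegL x
    have hycard : ((s.filter fun e => e.2 = y).card + 1) ≤ k := by
      have : (insert (x, y) (s.filter fun e => e.2 = y)) ⊆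
          ((insert (x, y) s).filter fun e => e.2 = y) := by
        intro e' he'
        rcases Finset.mem_insert.1 he' with rfl | he'
        · simp
        · rw [Finset.mem_filter] at he' ⊢
          exact ⟨Finset.mem_insert_of_mem he'.1, he'.2⟩
      calc (s.filter fun e => e.2 = y).card + 1
          = (insert (x, y) (s.filter fun e => e.2 = y)).card := by
            rw [Finset.card_insert_of_notMem fun h => he (Finset.mem_filter.1 h).1]
        _ ≤ ((insert (x, y) s).filter fun e => e.2 = y).card :=
            Finset.card_le_card this
        _ ≤ k := hdegR y
    -- find a color α missing at x
    have hαex : ∃ α < k, ∀ e' ∈ s, e'.1 = x → c e' ≠ α := by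
      set used := (s.filter fun e' => e'.1 = x).image c with husd
      have hsub : used ⊆ Finset.range k := by
        intro γ hγ
        rw [Finset.mem_image] at hγ
        obtain ⟨e', he', rfl⟩ := hγ
        exact Finset.mem_range.2 (hcol e' (Finset.mem_filter.1 he').1)
      have hltcard : used.card < (Finset.range k).card := by
        rw [Finset.card_range]
        exact lt_of_le_of_lt (Finset.card_image_le)
          (lt_of_lt_of_le (Nat.lt_succ_self _) hxcard)
      obtain ⟨α, hαr, hαu⟩ := Finset.exists_of_ssubset (hsub.ssubset_of_ne (by intro h; rw [h] at hltcard; exact lt_irrefl _ hltcard))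
      refine ⟨α, Finset.mem_range.1 hαr, fun e' he' he'1 hce' => ?_⟩
      exact hαu (Finset.mem_image.2 ⟨e', Finset.mem_filter.2 ⟨he', he'1⟩, hce'⟩)
    have hβex : ∃ β < k, ∀ e' ∈ s, e'.2 = y → c e' ≠ β := by
      set used := (s.filter fun e' => e'.2 = y).image c with husd
      have hsub : used ⊆ Finset.range k := by
        intro γ hγ
        rw [Finset.mem_image] at hγ
        obtain ⟨e', he', rfl⟩ := hγ
        exact Finset.mem_range.2 (hcol e' (Finset.mem_filter.1 he').1)
      have hltcard : used.card < (Finset.range k).card := by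
        rw [Finset.card_range]
        exact lt_of_le_of_lt (Finset.card_image_le)
          (lt_of_lt_of_le (Nat.lt_succ_self _) hycard)
      obtain ⟨β, hβr, hβu⟩ := Finset.exists_of_ssubset (hsub.ssubset_of_ne (by intro h; rw [h] at hltcard; exact lt_irrefl _ hltcard))
      refine ⟨β, Finset.mem_range.1 hβr, fun e' he' he'2 hce' => ?_⟩
      exact hβu (Finset.mem_image.2 ⟨e', Finset.mem_filter.2 ⟨he', he'2⟩, hce'⟩)
    obtain ⟨α, hα, hx⟩ := hαex
    obtain ⟨β, hβ, hy⟩ := hβex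
    exact extend_step s c k x y α β hα hβ he hcol hprop hx hy
end

section
/- For every k ≥ 1 and integers a, b with 1 ≤ a, b ≤ k, setting n = k² and c = max(a,b), and given any set A of c·k elements partitioned into c blocks A₀,...,A_{c−1} of size k each, the ak×b array M defined by filling column j+1, rows ik+1 through ik+k, with the elements of A_{(i+j) mod c} (for 0 ≤ i < a, 0 ≤ j < b) satisfies: (1) each column of M has distinct entries; (2) each k×b block (rows ik+1..ik+k) has distinct entries. -/
/-- The construction of Lemma 2: given a set A of (max a b)·k elements
partitioned into c = max a b blocks of size k, the ak×b array obtained by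
filling column j, rows ik..ik+k−1, with the elements of block (i+j) mod c
has distinct entries in each column and in each k×b block of rows. -/
theorem sudoku_subrectangle_construction {α : Type*} (k a b : ℕ)
    (hk : 1 ≤ k) (ha : 1 ≤ a) (hak : a ≤ k) (hb : 1 ≤ b) (hbk : b ≤ k)
    (A : ℕ → ℕ → α)
    (hA : ∀ i₁ < max a b, ∀ j₁ < k, ∀ i₂ < max a b, ∀ j₂ < k,
      A i₁ j₁ = A i₂ j₂ → i₁ = i₂ ∧ j₁ = j₂) :
    -- M row col is the entry of the array in row `row` and column `col`
    ∀ M : ℕ → ℕ → α,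
      (∀ row < a * k, ∀ col < b,
        M row col = A ((row / k + col) % max a b) (row % k)) →
      -- (1) each column of M has distinct entries
      (∀ col < b, ∀ r₁ < a * k, ∀ r₂ < a * k, M r₁ col = M r₂ col → r₁ = r₂) ∧
      -- (2) each k×b block of M (rows ik..ik+k−1) has distinct entries
      (∀ i < a, ∀ r₁ c₁ r₂ c₂ : ℕ,
        i * k ≤ r₁ → r₁ < (i + 1) * k → i * k ≤ r₂ → r₂ < (i + 1) * k →
        c₁ < b → c₂ < b → M r₁ c₁ = M r₂ c₂ → r₁ = r₂ ∧ c₁ = c₂) := by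
  intro M hM
  have hc : 0 < max a b := lt_of_lt_of_le ha (le_max_left a b)
  have hk' : 0 < k := hk
  constructor
  · intro col hcol r₁ hr₁ r₂ hr₂ heq
    rw [hM r₁ hr₁ col hcol, hM r₂ hr₂ col hcol] at heq
    obtain ⟨hi, hj⟩ := hA _ (Nat.mod_lt _ hc) _ (Nat.mod_lt _ hk') _
      (Nat.mod_lt _ hc) _ (Nat.mod_lt _ hk') heq
    have hd1 : r₁ / k < max a b :=
      lt_of_lt_of_le ((Nat.div_lt_iff_lt_mul hk').2 hr₁) (le_max_left a b)
    have hd2 : r₂ / k < max a b :=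
      lt_of_lt_of_le ((Nat.div_lt_iff_lt_mul hk').2 hr₂) (le_max_left a b)
    have hdd : r₁ / k = r₂ / k := by
      have h := Nat.ModEq.add_right_cancel' col hi
      rwa [Nat.ModEq, Nat.mod_eq_of_lt hd1, Nat.mod_eq_of_lt hd2] at h
    rw [← Nat.div_add_mod r₁ k, ← Nat.div_add_mod r₂ k, hdd, hj]
  · intro i hi r₁ c₁ r₂ c₂ h1 h2 h3 h4 hc₁ hc₂ heq
    have hrk1 : r₁ < a * k := lt_of_lt_of_le h2 (Nat.mul_le_mul_right k hi)
    have hrk2 : r₂ < a * k := lt_of_lt_of_le h4 (Nat.mul_le_mul_right k hi)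
    rw [hM r₁ hrk1 c₁ hc₁, hM r₂ hrk2 c₂ hc₂] at heq
    obtain ⟨hie, hj⟩ := hA _ (Nat.mod_lt _ hc) _ (Nat.mod_lt _ hk') _
      (Nat.mod_lt _ hc) _ (Nat.mod_lt _ hk') heq
    have hdiv1 : r₁ / k = i := Nat.div_eq_of_lt_le h1 h2
    have hdiv2 : r₂ / k = i := Nat.div_eq_of_lt_le h3 h4
    rw [hdiv1, hdiv2] at hie
    have hcc : c₁ = c₂ := by
      have h := Nat.ModEq.add_left_cancel' i hie
      rwa [Nat.ModEq, Nat.mod_eq_of_lt (lt_of_lt_of_le hc₁ (le_max_right a b)),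
        Nat.mod_eq_of_lt (lt_of_lt_of_le hc₂ (le_max_right a b))] at h
    refine ⟨?_, hcc⟩
    rw [← Nat.div_add_mod r₁ k, ← Nat.div_add_mod r₂ k, hdiv1, hdiv2, hj]
end

section
/- Suppose n = k² and m = lk for some 0 ≤ l < k. Then every m×n Sudoku rectangle can be completed to an n×n Sudoku square. -/
/-! Complete the rectangle one band of k rows at a time. For a block column, a symbol is missing
from at least k − l of its columns and each column misses k² − lk symbols, so Hall's theorem
matches the symbols perfectly to (column, slot) pairs, slots ranging over k values: every symbol
gets a column of the block column missing it, and every column gets exactly k symbols. Over all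
block columns these choices form a k-regular bipartite graph between symbols and columns, with
one column per block column at each symbol. By König's theorem it splits into k perfect matchings,
and the x-th matching fills row x of the new band. -/

/-- `S` (restricted to rows and columns below k²) is a Sudoku square of order
n = k²: entries in {1,…,k²}, and each symbol occurs at most once (hence, the
square being full, exactly once) in each row, each column, and each aligned
k×k block. -/
def IsSudokuSquare (k : ℕ) (S : ℕ → ℕ → ℕ) : Prop :=
  (∀ i < k ^ 2, ∀ j < k ^ 2, S i j ∈ Finset.Icc 1 (k ^ 2)) ∧
  (∀ i < k ^ 2, ∀ j₁ < k ^ 2, ∀ j₂ < k ^ 2, S i j₁ = S i j₂ → j₁ = j₂) ∧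
  (∀ j < k ^ 2, ∀ i₁ < k ^ 2, ∀ i₂ < k ^ 2, S i₁ j = S i₂ j → i₁ = i₂) ∧
  (∀ bi < k, ∀ bj < k, ∀ x₁ < k, ∀ y₁ < k, ∀ x₂ < k, ∀ y₂ < k,
    S (bi * k + x₁) (bj * k + y₁) = S (bi * k + x₂) (bj * k + y₂) → x₁ = x₂ ∧ y₁ = y₂)

/-- `R` (restricted to its first m rows, all columns below k²) is an m×n
Sudoku rectangle for n = k²: the first m rows are filled with entries from
{1,…,k²} satisfying the row, column and block conditions. -/
def IsSudokuRect (k m : ℕ) (R : ℕ → ℕ → ℕ) : Prop :=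
  (∀ i < m, ∀ j < k ^ 2, R i j ∈ Finset.Icc 1 (k ^ 2)) ∧
  (∀ i < m, ∀ j₁ < k ^ 2, ∀ j₂ < k ^ 2, R i j₁ = R i j₂ → j₁ = j₂) ∧
  (∀ j < k ^ 2, ∀ i₁ < m, ∀ i₂ < m, R i₁ j = R i₂ j → i₁ = i₂) ∧
  (∀ bi, ∀ bj < k, ∀ x₁ < k, ∀ y₁ < k, ∀ x₂ < k, ∀ y₂ < k,
    bi * k + x₁ < m → bi * k + x₂ < m →
    R (bi * k + x₁) (bj * k + y₁) = R (bi * k + x₂) (bj * k + y₂) → x₁ = x₂ ∧ y₁ = y₂)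

/-- The Sudoku square `S` is a completion of the m×n Sudoku rectangle `R`. -/
def CompletesTo (k m : ℕ) (R S : ℕ → ℕ → ℕ) : Prop :=
  IsSudokuSquare k S ∧ ∀ i < m, ∀ j < k ^ 2, S i j = R i j

open Finset

namespace Finset

variable {α β : Type*} (r : α → β → Prop) [∀ a b, Decidable (r a b)] {A : Finset α} {B : Finset β}
  {d : ℕ}

theorem exists_injOn_of_le_card_bipartiteAbove [Nonempty β] (hd : 0 < d)
    (hA : ∀ a ∈ A, d ≤ #(B.bipartiteAbove r a)) (hB : ∀ b ∈ B, #(A.bipartiteBelow r b) ≤ d) :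
    ∃ f : α → β, Set.InjOn f A ∧ ∀ a ∈ A, f a ∈ B ∧ r a (f a) := by
  classical
  let N : A → Finset β := fun a => B.bipartiteAbove r a
  have hall : ∀ s : Finset A, #s ≤ #(s.biUnion N) := fun s => by
    refine Nat.le_of_mul_le_mul_right ?_ hd
    refine card_mul_le_card_mul (fun a b => r a.1 b) (fun a ha => ?_) (fun b hb => ?_)
    · refine (hA a a.2).trans (card_le_card fun b hb => ?_)
      exact (mem_bipartiteAbove _).2 ⟨mem_biUnion.2 ⟨a, ha, hb⟩, ((mem_bipartiteAbove r).1 hb).2⟩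
    · obtain ⟨a, -, hba⟩ := mem_biUnion.1 hb
      refine le_trans (card_le_card_of_injOn Subtype.val (fun a' ha' => ?_)
        Subtype.val_injective.injOn) (hB b ((mem_bipartiteAbove r).1 hba).1)
      exact (mem_bipartiteBelow r).2 ⟨a'.2, ((mem_bipartiteBelow _).1 ha').2⟩
  obtain ⟨f, hf, hfN⟩ := (all_card_le_biUnion_card_iff_exists_injective N).1 hall
  refine ⟨fun a => if h : a ∈ A then f ⟨a, h⟩ else Classical.arbitrary β, ?_, fun a ha => ?_⟩
  · intro a ha a' ha' h
    simp only [dif_pos (mem_coe.1 ha), dif_pos (mem_coe.1 ha')] at h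
    exact congrArg Subtype.val (hf h)
  · simpa [dif_pos ha] using (mem_bipartiteAbove r).1 (hfN ⟨a, ha⟩)

theorem exists_bijOn_of_le_card_bipartiteAbove [Nonempty β] (hd : 0 < d) (hAB : #B ≤ #A)
    (hA : ∀ a ∈ A, d ≤ #(B.bipartiteAbove r a)) (hB : ∀ b ∈ B, #(A.bipartiteBelow r b) ≤ d) :
    ∃ f : α → β, Set.BijOn f A B ∧ ∀ a ∈ A, r a (f a) := by
  obtain ⟨f, hinj, hf⟩ := exists_injOn_of_le_card_bipartiteAbove r hd hA hB
  have hmaps : Set.MapsTo f A B := fun a ha => (hf a ha).1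
  exact ⟨f, ⟨hmaps, hinj, surjOn_of_injOn_of_card_le f hmaps hinj hAB⟩, fun a ha => (hf a ha).2⟩

theorem exists_bijOn_family_of_card_bipartiteAbove_eq [Nonempty β]
    (hA : ∀ a ∈ A, #(B.bipartiteAbove r a) = d) (hB : ∀ b ∈ B, #(A.bipartiteBelow r b) = d) :
    ∃ g : ℕ → α → β, (∀ x < d, Set.BijOn (g x) A B ∧ ∀ a ∈ A, r a (g x a)) ∧
      ∀ a ∈ A, Set.InjOn (g · a) (Set.Iio d) := by
  classical
  induction d generalizing r with
  | zero => exact ⟨fun _ _ => Classical.arbitrary β, by simp, by simp⟩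
  | succ d ih =>
    have hAB : #A = #B := by
      simpa using card_mul_eq_card_mul r hA hB
    obtain ⟨f, hf, hrf⟩ := exists_bijOn_of_le_card_bipartiteAbove r d.succ_pos hAB.ge
      (fun a ha => (hA a ha).ge) (fun b hb => (hB b hb).le)
    set r' : α → β → Prop := fun a b => r a b ∧ b ≠ f a
    have hA' : ∀ a ∈ A, #(B.bipartiteAbove r' a) = d := fun a ha => by
      have : B.bipartiteAbove r' a = (B.bipartiteAbove r a).erase (f a) := by
        ext b; simp only [r', mem_bipartiteAbove, mem_erase]; tauto
      rw [this, card_erase_of_mem ((mem_bipartiteAbove r).2 ⟨hf.mapsTo ha, hrf a ha⟩), hA a ha]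
      rfl
    have hB' : ∀ b ∈ B, #(A.bipartiteBelow r' b) = d := fun b hb => by
      obtain ⟨a₀, ha₀, rfl⟩ := hf.surjOn hb
      have : A.bipartiteBelow r' (f a₀) = (A.bipartiteBelow r (f a₀)).erase a₀ := by
        ext a
        simp only [r', mem_bipartiteBelow, mem_erase]
        constructor
        · rintro ⟨ha, hr, hne⟩
          exact ⟨fun h => hne (h ▸ rfl), ha, hr⟩
        · rintro ⟨hne, ha, hr⟩
          exact ⟨ha, hr, fun h => hne (hf.injOn ha ha₀ h.symm)⟩
      rw [this, card_erase_of_mem ((mem_bipartiteBelow r).2 ⟨ha₀, hrf a₀ ha₀⟩), hB _ hb]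
      rfl
    obtain ⟨g, hg, hgf⟩ := ih r' hA' hB'
    refine ⟨fun x => if x = d then f else g x, fun x hx => ?_, fun a ha x hx y hy hxy => ?_⟩
    · by_cases hxd : x = d
      · simpa [hxd] using ⟨hf, hrf⟩
      · have hx : x < d := by omega
        simpa [hxd] using ⟨(hg x hx).1, fun a ha => ((hg x hx).2 a ha).1⟩
    · have hne : ∀ z < d, g z a ≠ f a := fun z hz => ((hg z hz).2 a ha).2
      simp only [Set.mem_Iio] at hx hy hxy
      by_cases hxd : x = d <;> by_cases hyd : y = d <;>
        simp only [hxd, hyd, if_true, if_false] at hxy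
      · exact hxd.trans hyd.symm
      · exact absurd hxy.symm (hne y (by omega))
      · exact absurd hxy (hne x (by omega))
      · exact hgf a ha (show x < d by omega) (show y < d by omega) hxy

end Finset

def ColumnMisses (m : ℕ) (R : ℕ → ℕ → ℕ) (j s : ℕ) : Prop :=
  ∀ i < m, R i j ≠ s

instance (m : ℕ) (R : ℕ → ℕ → ℕ) (j s : ℕ) : Decidable (ColumnMisses m R j s) :=
  inferInstanceAs (Decidable (∀ i < m, R i j ≠ s))

lemma Nat.mul_add_div_of_lt {b k y : ℕ} (hy : y < k) : (b * k + y) / k = b :=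
  Nat.div_eq_of_lt_le (Nat.le_add_right _ _) (by rw [add_one_mul]; omega)

lemma Nat.mem_Ico_div_mul {k : ℕ} (hk : 0 < k) (j : ℕ) : j ∈ Ico (j / k * k) (j / k * k + k) := by
  have := Nat.div_add_mod' j k
  have := Nat.mod_lt j hk
  rw [mem_Ico]
  omega

namespace IsSudokuRect

variable {k l m : ℕ} {R : ℕ → ℕ → ℕ}

theorem card_filter_columnMisses (hR : IsSudokuRect k m R) {j : ℕ} (hj : j < k ^ 2) :
    #{s ∈ Icc 1 (k ^ 2) | ColumnMisses m R j s} = k ^ 2 - m := by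
  set present := (range m).image (R · j)
  have hsub : present ⊆ Icc 1 (k ^ 2) := by
    intro s hs
    obtain ⟨i, hi, rfl⟩ := mem_image.1 hs
    exact hR.1 i (mem_range.1 hi) j hj
  have hcard : #present = m :=
    (card_image_of_injOn fun i₁ hi₁ i₂ hi₂ h =>
      hR.2.2.1 j hj i₁ (by simpa using hi₁) i₂ (by simpa using hi₂) h).trans (card_range m)
  have : {s ∈ Icc 1 (k ^ 2) | ColumnMisses m R j s} = Icc 1 (k ^ 2) \ present := by
    ext s
    rw [mem_filter, mem_sdiff]
    simp [present, ColumnMisses]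
  rw [this, card_sdiff_of_subset hsub, hcard, Nat.card_Icc, Nat.add_sub_cancel]

theorem card_filter_not_columnMisses_le (hR : IsSudokuRect k (l * k) R) (s : ℕ) {bj : ℕ}
    (hbj : bj < k) : #{j ∈ Ico (bj * k) (bj * k + k) | ¬ColumnMisses (l * k) R j s} ≤ l := by
  have hk : 0 < k := by omega
  rw [← card_range l]
  refine card_le_card_of_forall_subsingleton (fun j b => ∃ x < k, R (b * k + x) j = s)
    (fun j hj => ?_) (fun b hb => ?_)
  · obtain ⟨-, hmiss⟩ := mem_filter.1 hj
    obtain ⟨i, hi, rfl⟩ : ∃ i < l * k, R i j = s := by simpa [ColumnMisses] using hmiss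
    refine ⟨i / k, mem_range.2 ((Nat.div_lt_iff_lt_mul hk).2 hi), i % k, Nat.mod_lt i hk, ?_⟩
    rw [Nat.div_add_mod']
  · rintro j₁ ⟨hj₁, x₁, hx₁, hR₁⟩ j₂ ⟨hj₂, x₂, hx₂, hR₂⟩
    have hb : b < l := mem_range.1 hb
    obtain ⟨hj₁, -⟩ := mem_filter.1 hj₁
    obtain ⟨hj₂, -⟩ := mem_filter.1 hj₂
    rw [mem_Ico] at hj₁ hj₂
    have hrow : ∀ x < k, b * k + x < l * k := fun x hx => by nlinarith
    obtain ⟨y₁, hy₁, rfl⟩ : ∃ y < k, bj * k + y = j₁ := ⟨j₁ - bj * k, by omega, by omega⟩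
    obtain ⟨y₂, hy₂, rfl⟩ : ∃ y < k, bj * k + y = j₂ := ⟨j₂ - bj * k, by omega, by omega⟩
    rw [(hR.2.2.2 b bj hbj x₁ hx₁ y₁ hy₁ x₂ hx₂ y₂ hy₂ (hrow x₁ hx₁) (hrow x₂ hx₂)
      (hR₁.trans hR₂.symm)).2]

theorem exists_columnAssignment (hR : IsSudokuRect k (l * k) R) (hl : l < k) {bj : ℕ}
    (hbj : bj < k) :
    ∃ col : ℕ → ℕ, (∀ s ∈ Icc 1 (k ^ 2),
      col s ∈ Ico (bj * k) (bj * k + k) ∧ ColumnMisses (l * k) R (col s) s) ∧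
      ∀ j ∈ Ico (bj * k) (bj * k + k), #{s ∈ Icc 1 (k ^ 2) | col s = j} = k := by
  set C := Ico (bj * k) (bj * k + k)
  have hC : #C = k := by simp [C]
  have hCcol : ∀ j ∈ C, j < k ^ 2 := fun j hj => by
    rw [mem_Ico] at hj
    nlinarith
  obtain ⟨f, hf, hfr⟩ := exists_bijOn_of_le_card_bipartiteAbove
    (fun s p => ColumnMisses (l * k) R p.1 s) (A := Icc 1 (k ^ 2)) (B := C ×ˢ range k)
    (d := (k - l) * k) (Nat.mul_pos (by omega) (by omega)) (by simp [hC, sq])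
    (fun s _ => by
      rw [bipartiteAbove, filter_product_left (ColumnMisses (l * k) R · s), card_product,
        card_range]
      refine Nat.mul_le_mul_right k ?_
      have := card_filter_add_card_filter_not (s := C) (ColumnMisses (l * k) R · s)
      have : #{j ∈ C | ¬ColumnMisses (l * k) R j s} ≤ l :=
        hR.card_filter_not_columnMisses_le s hbj
      omega)
    (fun p hp => by
      rw [bipartiteBelow, hR.card_filter_columnMisses (hCcol p.1 (mem_product.1 hp).1),
        Nat.sub_mul, sq])
  refine ⟨fun s => (f s).1, fun s hs => ⟨(mem_product.1 (hf.mapsTo hs)).1, hfr s hs⟩,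
    fun j hj => ?_⟩
  calc #{s ∈ Icc 1 (k ^ 2) | (f s).1 = j} = #({j} ×ˢ range k) := by
        refine card_nbij f (fun s hs => ?_) (hf.injOn.mono (filter_subset _ _)) (fun p hp => ?_)
        · obtain ⟨hsA, rfl⟩ := mem_filter.1 hs
          exact mem_product.2 ⟨mem_singleton_self _, (mem_product.1 (hf.mapsTo hsA)).2⟩
        · obtain ⟨hpj, hpk⟩ := mem_product.1 hp
          obtain ⟨s, hs, rfl⟩ := hf.surjOn (mem_product.2 ⟨mem_singleton.1 hpj ▸ hj, hpk⟩)
          exact ⟨s, mem_filter.2 ⟨hs, mem_singleton.1 hpj⟩, rfl⟩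
    _ = k := by simp

theorem exists_next_band (hR : IsSudokuRect k (l * k) R) (hl : l < k) :
    ∃ B : ℕ → ℕ → ℕ, IsSudokuRect k k B ∧
      ∀ x < k, ∀ j < k ^ 2, ColumnMisses (l * k) R j (B x j) := by
  have hk : 0 < k := by omega
  choose! col hcol hcard using fun bj (hbj : bj < k) => hR.exists_columnAssignment hl hbj
  have hdiv : ∀ j < k ^ 2, j / k < k := fun j hj => (Nat.div_lt_iff_lt_mul hk).2 (by rwa [← sq])
  have hcol_div : ∀ bj < k, ∀ s ∈ Icc 1 (k ^ 2), col bj s / k = bj := fun bj hbj s hs => by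
    have := mem_Ico.1 (hcol bj hbj s hs).1
    exact Nat.div_eq_of_lt_le this.1 (by rw [add_one_mul]; exact this.2)
  have hdeg : ∀ s ∈ Icc 1 (k ^ 2),
      #((range (k ^ 2)).bipartiteBelow (fun j s => col (j / k) s = j) s) = k := fun s hs => by
    have : (range (k ^ 2)).bipartiteBelow (fun j s => col (j / k) s = j) s
        = (range k).image (col · s) := by
      ext j
      simp only [mem_bipartiteBelow, mem_range, mem_image]
      constructor
      · rintro ⟨hj, hjs⟩
        exact ⟨j / k, hdiv j hj, hjs⟩
      · rintro ⟨bj, hbj, rfl⟩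
        have := mem_Ico.1 (hcol bj hbj s hs).1
        exact ⟨by nlinarith, by rw [hcol_div bj hbj s hs]⟩
    rw [this, card_image_of_injOn, card_range]
    intro b₁ hb₁ b₂ hb₂ h
    rw [← hcol_div b₁ (by simpa using hb₁) s hs, ← hcol_div b₂ (by simpa using hb₂) s hs]
    exact congrArg (· / k) h
  obtain ⟨g, hg, hg_inj⟩ := exists_bijOn_family_of_card_bipartiteAbove_eq
    (fun j s => col (j / k) s = j) (A := range (k ^ 2)) (B := Icc 1 (k ^ 2))
    (fun j hj => hcard (j / k) (hdiv j (mem_range.1 hj)) j (Nat.mem_Ico_div_mul hk j)) hdeg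
  refine ⟨g, ⟨fun x hx j hj => ?_, fun x hx j₁ hj₁ j₂ hj₂ h => ?_, fun j hj x₁ hx₁ x₂ hx₂ h => ?_,
    ?_⟩, fun x hx j hj => ?_⟩
  · exact (hg x hx).1.mapsTo (mem_range.2 hj)
  · exact (hg x hx).1.injOn (mem_range.2 hj₁) (mem_range.2 hj₂) h
  · exact hg_inj j (mem_range.2 hj) hx₁ hx₂ h
  · intro bi bj hbj x₁ hx₁ y₁ hy₁ x₂ hx₂ y₂ hy₂ hr₁ hr₂ h
    have hcol_g : ∀ x < k, ∀ y < k, col bj (g x (bj * k + y)) = bj * k + y := fun x hx y hy => by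
      have := (hg x hx).2 (bj * k + y) (mem_range.2 (by nlinarith))
      rwa [Nat.mul_add_div_of_lt hy] at this
    have hy : y₁ = y₂ := by
      have := (hcol_g _ hr₁ _ hy₁).symm.trans (h ▸ hcol_g _ hr₂ _ hy₂)
      omega
    subst hy
    have := hg_inj _ (mem_range.2 (by nlinarith)) hr₁ hr₂ h
    exact ⟨by omega, rfl⟩
  · have := (hcol (j / k) (hdiv j hj) (g x j) ((hg x hx).1.mapsTo (mem_range.2 hj))).2
    rwa [(hg x hx).2 j (mem_range.2 hj)] at this

theorem append (hR : IsSudokuRect k (l * k) R) {B : ℕ → ℕ → ℕ} (hB : IsSudokuRect k m B)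
    (hfresh : ∀ x < m, ∀ j < k ^ 2, ColumnMisses (l * k) R j (B x j)) :
    IsSudokuRect k (l * k + m) (fun i j => if i < l * k then R i j else B (i - l * k) j) := by
  refine ⟨fun i hi j hj => ?_, fun i hi j₁ hj₁ j₂ hj₂ h => ?_, fun j hj i₁ hi₁ i₂ hi₂ h => ?_, ?_⟩
  · by_cases hil : i < l * k
    · simpa only [if_pos hil] using hR.1 i hil j hj
    · simpa only [if_neg hil] using hB.1 _ (by omega) j hj
  · by_cases hil : i < l * k
    · simp only [if_pos hil] at h
      exact hR.2.1 i hil j₁ hj₁ j₂ hj₂ h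
    · simp only [if_neg hil] at h
      exact hB.2.1 _ (by omega) j₁ hj₁ j₂ hj₂ h
  · by_cases h₁ : i₁ < l * k <;> by_cases h₂ : i₂ < l * k <;>
      simp only [h₁, h₂, if_true, if_false] at h
    · exact hR.2.2.1 j hj i₁ h₁ i₂ h₂ h
    · exact absurd h (hfresh _ (by omega) j hj i₁ h₁)
    · exact absurd h.symm (hfresh _ (by omega) j hj i₂ h₂)
    · have := hB.2.2.1 j hj _ (by omega) _ (by omega) h
      omega
  · intro bi bj hbj x₁ hx₁ y₁ hy₁ x₂ hx₂ y₂ hy₂ hr₁ hr₂ h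
    by_cases hbi : bi < l
    · have hrow : ∀ x < k, bi * k + x < l * k := fun x hx => by nlinarith
      simp only [if_pos (hrow x₁ hx₁), if_pos (hrow x₂ hx₂)] at h
      exact hR.2.2.2 bi bj hbj x₁ hx₁ y₁ hy₁ x₂ hx₂ y₂ hy₂ (hrow x₁ hx₁) (hrow x₂ hx₂) h
    · have hlk : l * k ≤ bi * k := Nat.mul_le_mul_right k (by omega)
      have hshift : ∀ x, bi * k + x - l * k = (bi - l) * k + x := fun x => by
        rw [Nat.sub_mul]
        omega
      simp only [show ¬bi * k + x₁ < l * k by omega, show ¬bi * k + x₂ < l * k by omega,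
        if_false, hshift] at h
      exact hB.2.2.2 (bi - l) bj hbj x₁ hx₁ y₁ hy₁ x₂ hx₂ y₂ hy₂ (by rw [← hshift]; omega)
        (by rw [← hshift]; omega) h

theorem exists_full_extension (hR : IsSudokuRect k (l * k) R) (hl : l ≤ k) :
    ∃ S, IsSudokuRect k (k * k) S ∧ ∀ i < l * k, ∀ j < k ^ 2, S i j = R i j := by
  induction hn : k - l generalizing l R with
  | zero =>
    obtain rfl : l = k := by omega
    exact ⟨R, hR, fun _ _ _ _ => rfl⟩
  | succ n ih =>
    obtain ⟨B, hB, hfresh⟩ := hR.exists_next_band (by omega)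
    have hR' := hR.append hB hfresh
    rw [← add_one_mul] at hR'
    obtain ⟨S, hS, hSR⟩ := ih hR' (by omega) (by omega)
    refine ⟨S, hS, fun i hi j hj => ?_⟩
    rw [hSR i (by nlinarith) j hj, if_pos hi]

theorem isSudokuSquare (hR : IsSudokuRect k (k * k) R) : IsSudokuSquare k R := by
  obtain ⟨h₁, h₂, h₃, h₄⟩ := hR
  rw [← sq] at h₁ h₂ h₃ h₄
  exact ⟨h₁, h₂, h₃, fun bi hbi bj hbj x₁ hx₁ y₁ hy₁ x₂ hx₂ y₂ hy₂ =>
    h₄ bi bj hbj x₁ hx₁ y₁ hy₁ x₂ hx₂ y₂ hy₂ (by nlinarith) (by nlinarith)⟩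

end IsSudokuRect

/-- If m = lk with 0 ≤ l < k, then every m×k² Sudoku rectangle can be
completed to a k²×k² Sudoku square. -/
theorem sudoku_rect_completable_of_full_blocks (k l : ℕ) (hl : l < k)
    (R : ℕ → ℕ → ℕ) (hR : IsSudokuRect k (l * k) R) :
    ∃ S : ℕ → ℕ → ℕ, CompletesTo k (l * k) R S := by
  obtain ⟨S, hS, hSR⟩ := hR.exists_full_extension hl.le
  exact ⟨S, hS.isSudokuSquare, hSR⟩
end

section
/- The number of perfect matchings in an r-regular bipartite graph with n vertices in each part is at most (r!)^{n/r}. -/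
/-!
Schrijver's proof of Brégman's inequality. Count systems of distinct representatives `f` of a
family `(N i)_{i ∈ R}` of subsets of a set `C` with `|R| = |C|`, and let `P` be their number.
For each row `i`, sorting the `f` by the value `f i` and applying Jensen's inequality to
`x log x` gives `P^P ≤ ∏_f |N i| · P_{i, f i}`, where `P_{i,k}` counts the `f` with `f i = k`.
Multiplying over `i`, bounding each `P_{i, f i}` by induction (delete row `i` and column `f i`),
and observing that for a fixed `f` exactly `|N j| - 1` of the rows `i ≠ j` have `f i ∈ N j`,
one gets `P^{P |R|} ≤ (∏_j (|N j|!)^{1/|N j|})^{P |R|}`.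
-/

open Finset Function
open scoped Nat

theorem sum_pow_sum_le_card_pow_mul_prod_pow {ι : Type*} (s : Finset ι) (t : ι → ℕ) :
    (∑ k ∈ s, t k) ^ (∑ k ∈ s, t k) ≤ #s ^ (∑ k ∈ s, t k) * ∏ k ∈ s, t k ^ t k := by
  set T := ∑ k ∈ s, t k with hT
  rcases T.eq_zero_or_pos with hT0 | hTpos
  · rw [hT0, pow_zero, pow_zero, one_mul]
    exact prod_pos fun k _ => Nat.pow_self_pos
  have hc : (0 : ℝ) < #s := by exact_mod_cast (nonempty_of_sum_ne_zero hTpos.ne').card_pos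
  have hpos : ∀ k ∈ s, (0 : ℝ) < (t k : ℝ) ^ t k := fun k _ => by exact_mod_cast Nat.pow_self_pos
  have jensen := Real.convexOn_mul_log.map_sum_le (t := s) (w := fun _ => (#s : ℝ)⁻¹)
    (p := fun k => (t k : ℝ)) (fun _ _ => by positivity)
    (by rw [sum_const, nsmul_eq_mul, mul_inv_cancel₀ hc.ne'])
    (fun _ _ => Set.mem_Ici.2 (Nat.cast_nonneg _))
  simp only [smul_eq_mul, ← mul_sum, ← Nat.cast_sum, ← hT, mul_assoc] at jensen
  have hmean : ((#s : ℝ)⁻¹ * T) ^ T ≤ ∏ k ∈ s, (t k : ℝ) ^ t k := by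
    rw [← Real.log_le_log_iff (by positivity) (prod_pos hpos), Real.log_pow,
      Real.log_prod fun k hk => (hpos k hk).ne']
    simp only [Real.log_pow]
    exact le_of_mul_le_mul_left jensen (inv_pos.2 hc)
  have hreal : (T : ℝ) ^ T ≤ (#s : ℝ) ^ T * ∏ k ∈ s, (t k : ℝ) ^ t k := calc
    (T : ℝ) ^ T = (#s : ℝ) ^ T * ((#s : ℝ)⁻¹ * T) ^ T := by
      rw [← mul_pow, ← mul_assoc, mul_inv_cancel₀ hc.ne', one_mul]
    _ ≤ _ := by gcongr
  exact_mod_cast hreal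

theorem card_pow_card_le_prod_card_mul_card_fiber {ι κ : Type*} [DecidableEq κ] {M : Finset ι}
    {s : Finset κ} {g : ι → κ} (h : ∀ x ∈ M, g x ∈ s) :
    #M ^ #M ≤ ∏ x ∈ M, #s * #{y ∈ M | g y = g x} := by
  have hM : #M = ∑ k ∈ s, #{y ∈ M | g y = k} := card_eq_sum_card_fiberwise h
  have hfib : ∏ x ∈ M, #{y ∈ M | g y = g x} =
      ∏ k ∈ s, #{y ∈ M | g y = k} ^ #{y ∈ M | g y = k} := by
    rw [← prod_fiberwise_of_maps_to h]
    refine prod_congr rfl fun k _ => ?_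
    rw [prod_congr rfl fun x hx => by rw [(mem_filter.1 hx).2], prod_const]
  calc #M ^ #M = (∑ k ∈ s, #{y ∈ M | g y = k}) ^ (∑ k ∈ s, #{y ∈ M | g y = k}) := by rw [← hM]
    _ ≤ _ := sum_pow_sum_le_card_pow_mul_prod_pow s _
    _ = _ := by rw [← hM, prod_mul_distrib, prod_const, hfib]

theorem prod_prod_erase_comm {ι M : Type*} [CommMonoid M] [DecidableEq ι] (s : Finset ι)
    (g : ι → ι → M) : ∏ i ∈ s, ∏ j ∈ s.erase i, g i j = ∏ j ∈ s, ∏ i ∈ s.erase j, g i j :=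
  prod_comm' fun i j => by simp only [mem_erase]; grind

noncomputable def bregmanFactor (r : ℕ) : ℝ := (r ! : ℝ) ^ (1 / r : ℝ)

theorem bregmanFactor_nonneg (r : ℕ) : 0 ≤ bregmanFactor r := by
  unfold bregmanFactor; positivity

theorem bregmanFactor_pow (r n : ℕ) : bregmanFactor r ^ n = (r ! : ℝ) ^ (n / r : ℝ) := by
  rw [bregmanFactor, ← Real.rpow_natCast, ← Real.rpow_mul (by positivity), one_div_mul_eq_div]

theorem bregmanFactor_pow_self (r : ℕ) : bregmanFactor r ^ r = r ! := by
  rcases r.eq_zero_or_pos with rfl | hr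
  · simp
  · rw [bregmanFactor_pow, div_self (by positivity), Real.rpow_one]

theorem card_mul_bregmanFactor_pred_pow {r m : ℕ} (hr : 1 ≤ r) (hrm : r ≤ m) :
    r * bregmanFactor (r - 1) ^ (r - 1) * bregmanFactor r ^ (m - r) = bregmanFactor r ^ m := by
  rw [bregmanFactor_pow_self, ← Nat.cast_mul, Nat.mul_factorial_pred (by omega),
    ← bregmanFactor_pow_self, ← pow_add, Nat.add_sub_cancel' hrm]

section DistinctReps

variable {α β : Type*} [Fintype α] [DecidableEq α] [Fintype β] [DecidableEq β]

/-- Systems of distinct representatives of `(N i)_{i ∈ R}`, extended by the dummy value `d`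
outside `R` so that they form a finset of functions `α → β`. -/
def distinctReps (d : β) (R : Finset α) (N : α → Finset β) : Finset (α → β) :=
  {f | (∀ i ∈ R, f i ∈ N i) ∧ (∀ i ∉ R, f i = d) ∧ Set.InjOn f R}

variable {d : β} {R : Finset α} {C : Finset β} {N : α → Finset β} {f : α → β}

@[simp]
theorem mem_distinctReps :
    f ∈ distinctReps d R N ↔ (∀ i ∈ R, f i ∈ N i) ∧ (∀ i ∉ R, f i = d) ∧ Set.InjOn f R := by
  simp [distinctReps]

theorem card_distinctReps_empty_le_one : #(distinctReps d ∅ N) ≤ 1 :=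
  card_le_one.2 fun f hf g hg => funext fun i => by
    rw [(mem_distinctReps.1 hf).2.1 i (notMem_empty i),
      (mem_distinctReps.1 hg).2.1 i (notMem_empty i)]

theorem card_filter_apply_eq_card_distinctReps_erase {i : α} {k : β} (hi : i ∈ R) (hk : k ∈ N i) :
    #{f ∈ distinctReps d R N | f i = k} = #(distinctReps d (R.erase i) fun j => (N j).erase k) := by
  refine card_nbij' (update · i d) (update · i k) ?_ ?_ ?_ ?_ <;> intro f hf <;>
    simp only [coe_filter, mem_distinctReps, Set.InjOn, mem_coe, Set.mem_ofPred_eq, update_apply,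
      mem_erase] at hf ⊢ <;> grind

theorem image_erase_eq_of_mem_distinctReps (hRC : #R = #C) (hN : ∀ i ∈ R, N i ⊆ C)
    (hf : f ∈ distinctReps d R N) {j : α} (hj : j ∈ R) : (R.erase j).image f = C.erase (f j) := by
  obtain ⟨hfN, -, hinj⟩ := mem_distinctReps.1 hf
  refine eq_of_subset_of_card_le (fun k hk => ?_) ?_
  · obtain ⟨i, hi, rfl⟩ := mem_image.1 hk
    have hiR := mem_of_mem_erase hi
    exact mem_erase.2 ⟨fun h => ne_of_mem_erase hi (hinj hiR hj h), hN i hiR (hfN i hiR)⟩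
  · rw [card_image_of_injOn (hinj.mono (coe_subset.2 (erase_subset j R))), card_erase_of_mem hj,
      card_erase_of_mem (hN j hj (hfN j hj)), hRC]

theorem card_mul_prod_erase_bregmanFactor (hRC : #R = #C) (hN : ∀ i ∈ R, N i ⊆ C)
    (hf : f ∈ distinctReps d R N) {j : α} (hj : j ∈ R) :
    #(N j) * ∏ i ∈ R.erase j, bregmanFactor #((N j).erase (f i)) = bregmanFactor #(N j) ^ #R := by
  obtain ⟨hfN, -, hinj⟩ := mem_distinctReps.1 hf
  have hfj : f j ∈ N j := hfN j hj
  have hr : 1 ≤ #(N j) := card_pos.2 ⟨_, hfj⟩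
  have hrR : #(N j) ≤ #R := hRC ▸ card_le_card (hN j hj)
  have hNC : (N j).erase (f j) ⊆ C.erase (f j) := erase_subset_erase _ (hN j hj)
  have hin : ∏ k ∈ (N j).erase (f j), bregmanFactor #((N j).erase k) =
      bregmanFactor (#(N j) - 1) ^ (#(N j) - 1) := by
    rw [prod_congr rfl fun k hk => by rw [card_erase_of_mem (mem_of_mem_erase hk)], prod_const,
      card_erase_of_mem hfj]
  have hout : ∏ k ∈ C.erase (f j) \ (N j).erase (f j), bregmanFactor #((N j).erase k) =
      bregmanFactor #(N j) ^ (#R - #(N j)) := by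
    have hk : ∀ k ∈ C.erase (f j) \ (N j).erase (f j), k ∉ N j := fun k hk hkN =>
      (mem_sdiff.1 hk).2 (mem_erase.2 ⟨ne_of_mem_erase (mem_sdiff.1 hk).1, hkN⟩)
    rw [prod_congr rfl fun k hk' => by rw [erase_eq_of_notMem (hk k hk')], prod_const,
      card_sdiff_of_subset hNC, card_erase_of_mem hfj, card_erase_of_mem (hN j hj hfj), ← hRC]
    congr 1
    omega
  rw [← prod_image (f := fun k => bregmanFactor #((N j).erase k))
      (hinj.mono (coe_subset.2 (erase_subset j R))),
    image_erase_eq_of_mem_distinctReps hRC hN hf hj, ← prod_sdiff hNC, hin, hout,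
    ← card_mul_bregmanFactor_pred_pow hr hrR]
  ring

theorem card_distinctReps_le_prod_bregmanFactor (d : β) (hRC : #R = #C) (hN : ∀ i ∈ R, N i ⊆ C) :
    (#(distinctReps d R N) : ℝ) ≤ ∏ i ∈ R, bregmanFactor #(N i) := by
  induction hn : #R generalizing R C N with
  | zero =>
    rw [card_eq_zero.1 hn, prod_empty]
    exact_mod_cast card_distinctReps_empty_le_one
  | succ n ih =>
    set M := distinctReps d R N
    have hprod_nonneg := prod_nonneg fun i (_ : i ∈ R) => bregmanFactor_nonneg #(N i)
    rcases M.eq_empty_or_nonempty with hM | hM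
    · simpa [hM] using hprod_nonneg
    have hfiber : ∀ f ∈ M, ∀ i ∈ R, (#{g ∈ M | g i = f i} : ℝ) ≤
        ∏ j ∈ R.erase i, bregmanFactor #((N j).erase (f i)) := by
      intro f hf i hi
      have hfi : f i ∈ N i := (mem_distinctReps.1 hf).1 i hi
      rw [card_filter_apply_eq_card_distinctReps_erase hi hfi]
      exact ih (C := C.erase (f i))
        (by rw [card_erase_of_mem hi, card_erase_of_mem (hN i hi hfi), hRC])
        (fun j hj => erase_subset_erase _ (hN j (mem_of_mem_erase hj)))
        (by rw [card_erase_of_mem hi, hn, Nat.add_sub_cancel])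
    have key : (#M : ℝ) ^ (#M * #R) ≤ (∏ i ∈ R, bregmanFactor #(N i)) ^ (#M * #R) := calc
      (#M : ℝ) ^ (#M * #R) = ∏ i ∈ R, (#M : ℝ) ^ #M := by rw [prod_const, pow_mul]
      _ ≤ ∏ i ∈ R, ∏ f ∈ M, (#(N i) * #{g ∈ M | g i = f i} : ℝ) := by
        refine prod_le_prod (fun _ _ => by positivity) fun i hi => ?_
        exact_mod_cast card_pow_card_le_prod_card_mul_card_fiber fun f hf =>
          (mem_distinctReps.1 hf).1 i hi
      _ = ∏ f ∈ M, ∏ i ∈ R, (#(N i) * #{g ∈ M | g i = f i} : ℝ) := prod_comm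
      _ ≤ ∏ f ∈ M, ∏ i ∈ R, (#(N i) * ∏ j ∈ R.erase i, bregmanFactor #((N j).erase (f i))) := by
        refine prod_le_prod (fun _ _ => prod_nonneg fun _ _ => by positivity) fun f hf => ?_
        refine prod_le_prod (fun _ _ => by positivity) fun i hi => ?_
        exact mul_le_mul_of_nonneg_left (hfiber f hf i hi) (Nat.cast_nonneg _)
      _ = ∏ f ∈ M, ∏ j ∈ R, bregmanFactor #(N j) ^ #R := by
        refine prod_congr rfl fun f hf => ?_
        rw [prod_mul_distrib, prod_prod_erase_comm, ← prod_mul_distrib]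
        exact prod_congr rfl fun j hj => card_mul_prod_erase_bregmanFactor hRC hN hf hj
      _ = (∏ i ∈ R, bregmanFactor #(N i)) ^ (#M * #R) := by
        rw [prod_const, prod_pow, ← pow_mul, mul_comm]
    exact le_of_pow_le_pow_left₀ (by simp [hn, hM.card_pos.ne']) hprod_nonneg key

theorem card_distinctReps_univ (d : α) (N : α → Finset α) :
    #(distinctReps d univ N) = #{σ : Equiv.Perm α | ∀ a, σ a ∈ N a} := by
  refine (card_nbij (⇑) (fun σ hσ => ?_) DFunLike.coe_injective.injOn fun f hf => ?_).symm
  · simpa using ⟨(mem_filter.1 hσ).2, σ.injective⟩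
  · obtain ⟨hfN, hinj⟩ : (∀ a, f a ∈ N a) ∧ Injective f := by simpa using hf
    exact ⟨Equiv.ofBijective f (Finite.injective_iff_bijective.1 hinj), by simpa using hfN, rfl⟩

end DistinctReps

theorem perfect_matchings_upper_bound_general (n r : ℕ)
    (E : Finset (Fin n × Fin n))
    (hleft : ∀ a : Fin n, (E.filter fun e => e.1 = a).card = r) :
    ((Finset.univ.filter fun f : Equiv.Perm (Fin n) => ∀ a, (a, f a) ∈ E).card : ℝ) ≤
      (Nat.factorial r : ℝ) ^ ((n : ℝ) / r) := by
  rcases n.eq_zero_or_pos with rfl | hn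
  · simp
  set N : Fin n → Finset (Fin n) := fun a => {b | (a, b) ∈ E}
  have hN : ∀ a, #(N a) = r := fun a => hleft a ▸ card_nbij' (a, ·) Prod.snd
    (fun b hb => by simpa [N] using hb)
    (fun e he => by obtain ⟨he, rfl⟩ := mem_filter.1 he; simpa [N] using he)
    (fun _ _ => rfl) (fun e he => Prod.ext (mem_filter.1 he).2.symm rfl)
  calc ((Finset.univ.filter fun f : Equiv.Perm (Fin n) => ∀ a, (a, f a) ∈ E).card : ℝ)
      = #(distinctReps ⟨0, hn⟩ univ N) := by rw [card_distinctReps_univ]; simp [N]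
    _ ≤ ∏ a, bregmanFactor #(N a) :=
      card_distinctReps_le_prod_bregmanFactor _ rfl fun _ _ => subset_univ _
    _ = (r ! : ℝ) ^ ((n : ℝ) / r) := by simp [hN, bregmanFactor_pow]

/-- Brégman–Minc bound: the number of perfect matchings of an r-regular
bipartite graph with n vertices in each part is at most (r!)^{n/r}. -/
theorem perfect_matchings_upper_bound (n r : ℕ)
    (E : Finset (Fin n × Fin n))
    (hleft : ∀ a : Fin n, (E.filter fun e => e.1 = a).card = r)
    (hright : ∀ b : Fin n, (E.filter fun e => e.2 = b).card = r) :
    ((Finset.univ.filter fun f : Equiv.Perm (Fin n) => ∀ a, (a, f a) ∈ E).card : ℝ) ≤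
      (Nat.factorial r : ℝ) ^ ((n : ℝ) / r) :=
  perfect_matchings_upper_bound_general n r E hleft
end
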